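/- arXiv:1401.1745 — 2 statements merged into one kernel-verified Lean document; each statement's English description precedes it below -/
import Mathlib

section
/- Let X be a finite simple graph that belongs to a symmetric association scheme. If X admits perfect state transfer between some pair of distinct vertices at some time, then every eigenvalue of the adjacency matrix of X is an integer. -/
open Matrix

/-- The transition matrix `U(t) = exp(itA)` of the continuous-time quantum walk on `G`. -/
noncomputable def transitionMatrix {V : Type*} [Fintype V] [DecidableEq V]
    (G : SimpleGraph V) (t : ℝ) : Matrix V V ℂ :=
  letI := Classical.decRel G.Adj
  NormedSpace.exp ((Complex.I * (t : ℂ)) • G.adjMatrix ℂ)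

/-- `G` admits perfect state transfer from `u` to `v` at time `t`. -/
def HasPST {V : Type*} [Fintype V] [DecidableEq V]
    (G : SimpleGraph V) (u v : V) (t : ℝ) : Prop :=
  u ≠ v ∧ ∃ μ : ℂ, transitionMatrix G t *ᵥ (Pi.single u 1 : V → ℂ)
      = μ • (Pi.single v 1 : V → ℂ)

/-- A symmetric association scheme with `d` classes. -/
structure IsAssocScheme {V : Type*} [Fintype V] [DecidableEq V] {d : ℕ}
    (A : Fin (d+1) → Matrix V V ℝ) : Prop where
  entries : ∀ i u v, A i u v = 0 ∨ A i u v = 1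
  ident : A 0 = 1
  symm : ∀ i, (A i).IsSymm
  total : ∑ i, A i = Matrix.of fun _ _ => 1
  inter : ∀ i j, ∃ p : Fin (d+1) → ℕ, A i * A j = ∑ k, (p k : ℝ) • A k

/-- `T` is a symmetric 0-1 permutation matrix of order two with no fixed points. -/
def IsPermOrderTwoNoFixed {V : Type*} [Fintype V] [DecidableEq V] (T : Matrix V V ℝ) : Prop :=
  (∀ u v, T u v = 0 ∨ T u v = 1) ∧ T.IsSymm ∧ (∀ u, T u u = 0) ∧
  T * T = 1 ∧ (∀ u, ∃! v, T u v = 1)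

/-!
The transition matrix `U(τ) = exp(iτA)` lies in the Bose–Mesner algebra of the scheme, whose
elements are constant on every class. A column of `U(τ)` supported on a single vertex therefore
forces `U(τ) = μ A_r` for one class `r`, and that class is a symmetric permutation matrix, so
`U(2τ) = μ² I`. Hence `exp(2iτθ)` is the same for all eigenvalues `θ`, i.e. every eigenvalue lies
in `k + (π/τ)ℤ`, where `k ≠ 0` is the valency of the (regular) graph. As the eigenvalues sum to
`tr A = 0`, the number `π/τ` is rational; so each eigenvalue is a rational algebraic integer.
-/

theorem existsUnique_eq_one_of_sum_eq_one {ι : Type*} [Fintype ι] {f : ι → ℝ}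
    (hf : ∀ i, f i = 0 ∨ f i = 1) (hsum : ∑ i, f i = 1) : ∃! i, f i = 1 := by
  classical
  have hf' : ∀ i, f i = if f i = 1 then 1 else 0 := fun i => by
    rcases hf i with h | h <;> simp [h]
  rw [Finset.sum_congr rfl fun i _ => hf' i, Finset.sum_boole, Nat.cast_eq_one,
    Finset.card_eq_one] at hsum
  obtain ⟨a, ha⟩ := hsum
  refine ⟨a, ?_, fun b hb => ?_⟩
  · simpa using ha.ge (Finset.mem_singleton_self a)
  · simpa using ha.le (Finset.mem_filter.2 ⟨Finset.mem_univ b, hb⟩)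

theorem exists_int_eq_add_mul_of_cexp_eq {t x y : ℝ} (ht : t ≠ 0)
    (h : Complex.exp (Complex.I * t * x) = Complex.exp (Complex.I * t * y)) :
    ∃ m : ℤ, x = y + m * (2 * Real.pi / t) := by
  obtain ⟨m, hm⟩ := Complex.exp_eq_exp_iff_exists_int.mp h
  refine ⟨m, ?_⟩
  have him : t * x = t * y + m * (2 * Real.pi) := by simpa using congrArg Complex.im hm
  field_simp
  linarith

theorem exists_rat_eq_of_sum_add_mul_eq_zero {ι : Type*} [Fintype ι] [Nonempty ι] {k : ℚ}
    (hk : k ≠ 0) {c : ℝ} (m : ι → ℤ) (h : ∑ i, ((k : ℝ) + m i * c) = 0) : ∃ q : ℚ, c = q := by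
  rw [Finset.sum_add_distrib, Finset.sum_const, Finset.card_univ, nsmul_eq_mul,
    ← Finset.sum_mul] at h
  have hN : ∑ i, (m i : ℝ) ≠ 0 := fun hN => by
    rw [hN, zero_mul, add_zero] at h
    exact mul_ne_zero (Nat.cast_ne_zero.2 Fintype.card_ne_zero) (Rat.cast_ne_zero.2 hk) h
  refine ⟨-(Fintype.card ι * k) / ∑ i, (m i : ℚ), ?_⟩
  push_cast
  field_simp
  linarith

theorem exists_int_eq_of_isIntegral_of_eq_ratCast {K : Type*} [Field K] [CharZero K] {x : K}
    (hx : IsIntegral ℤ x) {q : ℚ} (hq : x = q) : ∃ k : ℤ, x = k := by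
  subst hq
  rw [← eq_ratCast (algebraMap ℚ K) q,
    isIntegral_algebraMap_iff (algebraMap ℚ K).injective] at hx
  obtain ⟨k, hk⟩ := IsIntegrallyClosed.isIntegral_iff.mp hx
  exact ⟨k, by rw [← hk]; simp⟩

namespace Matrix

variable {V : Type*} [Fintype V] [DecidableEq V]

theorem mul_self_eq_one_of_isSymm {M : Matrix V V ℝ} (h01 : ∀ w z, M w z = 0 ∨ M w z = 1)
    (hM : M.IsSymm) (hrow : ∀ w, ∃! z, M w z = 1) : M * M = 1 := by
  ext w z
  obtain ⟨y, hy, hy_unique⟩ := hrow w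
  have hrow_w : ∀ x, M w x = if x = y then 1 else 0 := fun x => by
    split_ifs with hx
    · rw [hx, hy]
    · exact (h01 w x).resolve_right (mt (hy_unique x) hx)
  have hyw : M y w = 1 := (hM.apply w y).trans hy
  rw [mul_apply, Finset.sum_eq_single y (fun x _ hx => by rw [hrow_w, if_neg hx, zero_mul])
    (by simp), hy, one_mul, one_apply]
  obtain ⟨w', -, hw'⟩ := hrow y
  split_ifs with hwz
  · rw [← hwz, hyw]
  · exact (h01 y z).resolve_right fun hyz => hwz ((hw' w hyw).trans (hw' z hyz).symm)

theorem isIntegral_of_mem_spectrum_map {R K : Type*} [CommRing R] [Field K] [Algebra R K]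
    (M : Matrix V V R) {x : K} (hx : x ∈ spectrum K (M.map (algebraMap R K))) : IsIntegral R x :=
  ⟨M.charpoly, M.charpoly_monic, by
    rw [← Polynomial.eval_map, ← Matrix.charpoly_map]
    exact Matrix.mem_spectrum_iff_isRoot_charpoly.mp hx⟩

theorem exp_mulVec_of_mulVec_eq_smul {M : Matrix V V ℂ} {w : V → ℂ} {α : ℂ}
    (h : M *ᵥ w = α • w) : NormedSpace.exp M *ᵥ w = Complex.exp α • w := by
  let _ : NormedRing (Matrix V V ℂ) := Matrix.linftyOpNormedRing
  let _ : NormedAlgebra ℂ (Matrix V V ℂ) := Matrix.linftyOpNormedAlgebra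
  have hpow : ∀ n : ℕ, M ^ n *ᵥ w = α ^ n • w := fun n => by
    induction n with
    | zero => simp
    | succ n ih => rw [pow_succ', ← mulVec_mulVec, ih, mulVec_smul, h, smul_smul, ← pow_succ]
  let L : Matrix V V ℂ →ₗ[ℂ] V → ℂ :=
    { toFun := fun N => N *ᵥ w
      map_add' := fun N N' => add_mulVec N N' w
      map_smul' := fun c N => smul_mulVec c N w }
  have hseries : HasSum (fun n : ℕ => L ((n.factorial : ℂ)⁻¹ • M ^ n))
      (L (NormedSpace.exp M)) :=
    (NormedSpace.exp_series_hasSum_exp' M).map L L.continuous_of_finiteDimensional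
  have hterm : ∀ n : ℕ, L ((n.factorial : ℂ)⁻¹ • M ^ n) = ((n.factorial : ℂ)⁻¹ • α ^ n) • w :=
    fun n => by
      change ((n.factorial : ℂ)⁻¹ • M ^ n) *ᵥ w = _
      rw [smul_mulVec, hpow, smul_smul, smul_eq_mul]
  simp only [hterm] at hseries
  rw [Complex.exp_eq_exp_ℂ]
  exact hseries.unique ((NormedSpace.exp_series_hasSum_exp' α).smul_const w)

end Matrix

theorem SimpleGraph.map_adjMatrix {V : Type*} (G : SimpleGraph V) [DecidableRel G.Adj]
    {α β : Type*} [Zero α] [One α] [Zero β] [One β] {f : α → β} (h0 : f 0 = 0) (h1 : f 1 = 1) :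
    (G.adjMatrix α).map f = G.adjMatrix β := by
  ext i j
  by_cases hij : G.Adj i j <;> simp [hij, h0, h1]

theorem SimpleGraph.IsRegularOfDegree.adjMatrix_eq_zero {V : Type*} [Fintype V]
    {G : SimpleGraph V} [DecidableRel G.Adj] (h : G.IsRegularOfDegree 0) (α : Type*)
    [Zero α] [One α] : G.adjMatrix α = 0 := by
  ext i j
  have hij : ¬G.Adj i j := fun hij => ((G.degree_pos_iff_exists_adj i).2 ⟨j, hij⟩).ne' (h i)
  simp [hij]

section QuantumWalk

open Complex

variable {V : Type*} [Fintype V] [DecidableEq V]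

-- `transitionMatrix` is defined with `Classical.decRel`; this holds for any instance.
theorem transitionMatrix_eq (G : SimpleGraph V) [DecidableRel G.Adj] (t : ℝ) :
    transitionMatrix G t = NormedSpace.exp ((I * t) • G.adjMatrix ℂ) := by
  unfold transitionMatrix
  congr!

theorem transitionMatrix_add (G : SimpleGraph V) (s t : ℝ) :
    transitionMatrix G (s + t) = transitionMatrix G s * transitionMatrix G t := by
  classical
  simp only [transitionMatrix_eq]
  rw [← Matrix.exp_add_of_commute _ _ ((Commute.refl _).smul_left _ |>.smul_right _),
    ← add_smul, ofReal_add, mul_add]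

theorem transitionMatrix_mulVec_of_mulVec_eq_smul (G : SimpleGraph V) [DecidableRel G.Adj]
    {w : V → ℂ} {x : ℂ} (h : G.adjMatrix ℂ *ᵥ w = x • w) (t : ℝ) :
    transitionMatrix G t *ᵥ w = exp (I * t * x) • w := by
  rw [transitionMatrix_eq]
  exact Matrix.exp_mulVec_of_mulVec_eq_smul (by rw [Matrix.smul_mulVec, h, smul_smul])

theorem isUnit_transitionMatrix (G : SimpleGraph V) (t : ℝ) : IsUnit (transitionMatrix G t) :=
  Matrix.isUnit_exp _

theorem cexp_eq_of_transitionMatrix_eq_smul_one {G : SimpleGraph V} [DecidableRel G.Adj]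
    {t : ℝ} {c : ℂ} (hc : transitionMatrix G t = c • 1) {w : V → ℝ} (hw : w ≠ 0) {x : ℝ}
    (hx : G.adjMatrix ℝ *ᵥ w = x • w) : exp (I * t * x) = c := by
  have hxℂ : G.adjMatrix ℂ *ᵥ (ofReal ∘ w) = (x : ℂ) • (ofReal ∘ w) := funext fun i => by
    rw [← G.map_adjMatrix (f := ofRealHom) (map_zero _) (map_one _)]
    exact (RingHom.map_mulVec ofRealHom _ w i).symm.trans
      (by simpa using congrArg ofReal (congrFun hx i))
  have hw' : (ofReal ∘ w) ≠ 0 := fun h0 => hw (funext fun i => by simpa using congrFun h0 i)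
  have := transitionMatrix_mulVec_of_mulVec_eq_smul G hxℂ t
  rw [hc, Matrix.smul_mulVec, Matrix.one_mulVec] at this
  exact smul_left_injective ℂ hw' this.symm

theorem SimpleGraph.IsRegularOfDegree.exists_int_eq_of_transitionMatrix_eq_smul_one
    {G : SimpleGraph V} [DecidableRel G.Adj] {k : ℕ} (hreg : G.IsRegularOfDegree k) (hk : k ≠ 0)
    {t : ℝ} (ht : t ≠ 0) {c : ℂ} (hc : transitionMatrix G t = c • 1) :
    ∀ x ∈ spectrum ℝ (G.adjMatrix ℝ), ∃ n : ℤ, x = n := by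
  have hones : G.adjMatrix ℝ *ᵥ Function.const V 1 = (k : ℝ) • Function.const V 1 :=
    funext fun w => by simp [hreg w]
  have hH : (G.adjMatrix ℝ).IsHermitian := Matrix.isHermitian_iff_isSymm.mpr G.isSymm_adjMatrix
  intro x hx
  have hint : IsIntegral ℤ x := (G.adjMatrix ℤ).isIntegral_of_mem_spectrum_map <| by
    rwa [G.map_adjMatrix (map_zero _) (map_one _)]
  rw [hH.spectrum_real_eq_range_eigenvalues] at hx
  obtain ⟨i, rfl⟩ := hx
  have : Nonempty V := ⟨i⟩
  -- every eigenvalue lies in `k + (2π/t)ℤ`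
  choose m hm using fun j => exists_int_eq_add_mul_of_cexp_eq ht
    ((cexp_eq_of_transitionMatrix_eq_smul_one hc
      (fun h0 => hH.eigenvectorBasis.orthonormal.ne_zero j (by ext l; exact congrFun h0 l))
      (hH.mulVec_eigenvectorBasis j)).trans
    (cexp_eq_of_transitionMatrix_eq_smul_one hc (Function.const_ne_zero.2 one_ne_zero)
      hones).symm)
  have htrace : ∑ j, hH.eigenvalues j = 0 := by simpa using hH.trace_eq_sum_eigenvalues.symm
  obtain ⟨q, hq⟩ := exists_rat_eq_of_sum_add_mul_eq_zero (k := k) (Nat.cast_ne_zero.2 hk) m <| by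
    rw [← htrace]
    exact Finset.sum_congr rfl fun j _ => by rw [hm j]; push_cast; rfl
  exact exists_int_eq_of_isIntegral_of_eq_ratCast hint (q := k + m i * q)
    (by rw [hm i, hq]; push_cast; ring)

theorem ne_zero_of_transitionMatrix_mulVec_single {G : SimpleGraph V} {u v : V} {t : ℝ} {μ : ℂ}
    (h : transitionMatrix G t *ᵥ Pi.single u 1 = μ • Pi.single v 1) : μ ≠ 0 := by
  rintro rfl
  obtain ⟨U, hU⟩ := isUnit_transitionMatrix G t
  have : (Pi.single u 1 : V → ℂ) = 0 := by
    rw [← Matrix.one_mulVec (Pi.single u 1 : V → ℂ), ← U.inv_mul, ← Matrix.mulVec_mulVec, hU, h,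
      zero_smul, Matrix.mulVec_zero]
  simpa using congrFun this u

theorem HasPST.smul_adjMatrix_ne_zero {G : SimpleGraph V} [DecidableRel G.Adj] {u v : V} {t : ℝ}
    (h : HasPST G u v t) :
    (I * t) • G.adjMatrix ℂ ≠ 0 := by
  obtain ⟨huv, μ, hμ⟩ := h
  intro h0
  rw [transitionMatrix_eq, h0, NormedSpace.exp_zero, Matrix.one_mulVec] at hμ
  simpa [huv] using congrFun hμ u

end QuantumWalk

namespace IsAssocScheme

variable {V : Type*} [Fintype V] [DecidableEq V] {d : ℕ} {A : Fin (d+1) → Matrix V V ℝ}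
  {G : SimpleGraph V} [DecidableRel G.Adj]

theorem existsUnique_apply_eq_one (hA : IsAssocScheme A) (w z : V) : ∃! i, A i w z = 1 :=
  existsUnique_eq_one_of_sum_eq_one (fun i => hA.entries i w z) <| by
    simpa [Matrix.sum_apply] using congrFun (congrFun hA.total w) z

theorem apply_eq_zero_of_ne (hA : IsAssocScheme A) {i j : Fin (d+1)} {w z : V}
    (hi : A i w z = 1) (hj : j ≠ i) : A j w z = 0 :=
  (hA.entries j w z).resolve_right fun h => hj ((hA.existsUnique_apply_eq_one w z).unique h hi)

theorem apply_self_eq_zero (hA : IsAssocScheme A) {i : Fin (d+1)} (hi : i ≠ 0) (w : V) :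
    A i w w = 0 :=
  hA.apply_eq_zero_of_ne (by simp [hA.ident]) hi

theorem sum_apply_eq_sum_apply (hA : IsAssocScheme A) (i : Fin (d+1)) (w w' : V) :
    ∑ z, A i w z = ∑ z, A i w' z := by
  obtain ⟨p, hp⟩ := hA.inter i i
  have hdiag : ∀ x, ∑ z, A i x z = p 0 := fun x => by
    have hsq : ∀ z, A i x z * A i z x = A i x z := fun z => by
      rw [(hA.symm i).apply x z]; rcases hA.entries i x z with h | h <;> simp [h]
    have hp0 : (∑ k, (p k : ℝ) • A k) x x = p 0 := by
      rw [Matrix.sum_apply, Finset.sum_eq_single 0 (fun j _ hj => by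
        simp [hA.apply_self_eq_zero hj]) (by simp)]
      simp [hA.ident]
    rw [← hp0, ← hp, Matrix.mul_apply]
    exact (Finset.sum_congr rfl fun z _ => hsq z).symm
  rw [hdiag, hdiag]

theorem exists_apply_eq_one (hA : IsAssocScheme A) {i : Fin (d+1)} {w z : V} (h : A i w z = 1)
    (u : V) : ∃ y, A i y u = 1 := by
  by_contra! hne
  have hrow : ∑ y, A i u y = 0 := Finset.sum_eq_zero fun y _ =>
    (hA.entries i u y).resolve_right (by rw [(hA.symm i).apply y u]; exact hne y)
  have hpos : 0 < ∑ y, A i w y := Finset.sum_pos' (fun y _ => by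
    rcases hA.entries i w y with h | h <;> simp [h]) ⟨z, Finset.mem_univ z, by simp [h]⟩
  rw [hA.sum_apply_eq_sum_apply i w u, hrow] at hpos
  exact hpos.false

theorem mul_mem_span (hA : IsAssocScheme A) {M N : Matrix V V ℂ}
    (hM : M ∈ Submodule.span ℂ (Set.range fun i => (A i).map Complex.ofReal))
    (hN : N ∈ Submodule.span ℂ (Set.range fun i => (A i).map Complex.ofReal)) :
    M * N ∈ Submodule.span ℂ (Set.range fun i => (A i).map Complex.ofReal) := by
  have hbasis : ∀ i j, (A i).map Complex.ofReal * (A j).map Complex.ofReal ∈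
      Submodule.span ℂ (Set.range fun i => (A i).map Complex.ofReal) := fun i j => by
    obtain ⟨p, hp⟩ := hA.inter i j
    have : (A i).map Complex.ofReal * (A j).map Complex.ofReal =
        ∑ k, (p k : ℂ) • (A k).map Complex.ofReal := by
      ext w z
      simpa [Matrix.mul_apply, Matrix.sum_apply] using
        congrArg Complex.ofReal (congrFun (congrFun hp w) z)
    rw [this]
    exact Submodule.sum_mem _ fun k _ => Submodule.smul_mem _ _ (Submodule.subset_span ⟨k, rfl⟩)
  obtain ⟨c, rfl⟩ := (Submodule.mem_span_range_iff_exists_fun ℂ).mp hM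
  obtain ⟨c', rfl⟩ := (Submodule.mem_span_range_iff_exists_fun ℂ).mp hN
  simp only [Finset.sum_mul, Finset.mul_sum, smul_mul_smul_comm]
  exact Submodule.sum_mem _ fun i _ => Submodule.sum_mem _ fun j _ =>
    Submodule.smul_mem _ _ (hbasis j i)

theorem one_mem_span (hA : IsAssocScheme A) :
    (1 : Matrix V V ℂ) ∈ Submodule.span ℂ (Set.range fun i => (A i).map Complex.ofReal) :=
  Submodule.subset_span ⟨0, by simp [hA.ident]⟩

def boseMesner (hA : IsAssocScheme A) : Subalgebra ℂ (Matrix V V ℂ) :=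
  (Submodule.span ℂ (Set.range fun i => (A i).map Complex.ofReal)).toSubalgebra
    hA.one_mem_span fun _ _ => hA.mul_mem_span

theorem mem_boseMesner_iff (hA : IsAssocScheme A) {M : Matrix V V ℂ} :
    M ∈ hA.boseMesner ↔ ∃ c : Fin (d+1) → ℂ, ∑ i, c i • (A i).map Complex.ofReal = M :=
  Submodule.mem_span_range_iff_exists_fun ℂ

theorem exp_mem_boseMesner (hA : IsAssocScheme A) {M : Matrix V V ℂ} (hM : M ∈ hA.boseMesner) :
    NormedSpace.exp M ∈ hA.boseMesner :=
  NormedSpace.exp_mem (R := ℂ) (s := hA.boseMesner)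
    (Submodule.closed_of_finiteDimensional (Subalgebra.toSubmodule hA.boseMesner)) hM

theorem sum_smul_map_apply (hA : IsAssocScheme A) (c : Fin (d+1) → ℂ) {i : Fin (d+1)} {w z : V}
    (h : A i w z = 1) : (∑ j, c j • (A j).map Complex.ofReal) w z = c i := by
  rw [Matrix.sum_apply, Finset.sum_eq_single i (fun j _ hj => by
    simp [hA.apply_eq_zero_of_ne h hj]) (by simp)]
  simp [h]

theorem eq_smul_of_mulVec_single (hA : IsAssocScheme A) {M : Matrix V V ℂ}
    (hM : M ∈ hA.boseMesner) {u v : V} {μ : ℂ} {r : Fin (d+1)} (hr : A r v u = 1)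
    (h : M *ᵥ Pi.single u 1 = μ • Pi.single v 1) : M = μ • (A r).map Complex.ofReal := by
  obtain ⟨c, rfl⟩ := hA.mem_boseMesner_iff.mp hM
  have hcol : ∀ y, (∑ j, c j • (A j).map Complex.ofReal) y u = if y = v then μ else 0 :=
    fun y => by simpa [Matrix.mulVec_single_one, Pi.single_apply] using congrFun h y
  have hcr : c r = μ := by rw [← hA.sum_smul_map_apply c hr, hcol, if_pos rfl]
  rw [Finset.sum_eq_single r (fun j _ hj => ?_) (by simp), hcr]
  ext w z
  rcases hA.entries j w z with h0 | h1
  · simp [h0]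
  · obtain ⟨y, hy⟩ := hA.exists_apply_eq_one h1 u
    have hyv : y ≠ v := by
      rintro rfl; exact hj ((hA.existsUnique_apply_eq_one y u).unique hy hr)
    have hcj : c j = 0 := by rw [← hA.sum_smul_map_apply c hy, hcol, if_neg hyv]
    simp [hcj]

theorem mul_self_eq_one_of_apply_eq_one (hA : IsAssocScheme A) {r : Fin (d+1)} {u v : V}
    (hr : A r v u = 1) (hcol : ∀ w, A r w u = 1 → w = v) : A r * A r = 1 := by
  have hsum_u : ∑ z, A r u z = 1 := by
    rw [Finset.sum_eq_single v (fun w _ hw => ?_) (by simp), ← hr]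
    · exact (hA.symm r).apply v u
    · rw [← (hA.symm r).apply u w]
      exact (hA.entries r w u).resolve_right (mt (hcol w) hw)
  refine Matrix.mul_self_eq_one_of_isSymm (hA.entries r) (hA.symm r) fun w => ?_
  exact existsUnique_eq_one_of_sum_eq_one (hA.entries r w)
    ((hA.sum_apply_eq_sum_apply r w u).trans hsum_u)

theorem adjMatrix_mem_boseMesner (hA : IsAssocScheme A)
    (hMem : ∃ coeff : Fin (d+1) → ℝ, G.adjMatrix ℝ = ∑ i, coeff i • A i) :
    G.adjMatrix ℂ ∈ hA.boseMesner := by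
  obtain ⟨coeff, hcoeff⟩ := hMem
  refine hA.mem_boseMesner_iff.mpr ⟨fun i => coeff i, ?_⟩
  rw [← G.map_adjMatrix (f := Complex.ofReal) Complex.ofReal_zero Complex.ofReal_one, hcoeff]
  ext w z
  simp [Matrix.sum_apply]

theorem exists_transitionMatrix_two_mul_eq_smul_one (hA : IsAssocScheme A)
    (hMem : ∃ coeff : Fin (d+1) → ℝ, G.adjMatrix ℝ = ∑ i, coeff i • A i) {u v : V} {τ : ℝ}
    (h : HasPST G u v τ) : ∃ c : ℂ, transitionMatrix G (2 * τ) = c • 1 := by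
  obtain ⟨-, μ, hμ⟩ := h
  have hU : transitionMatrix G τ ∈ hA.boseMesner := by
    rw [transitionMatrix_eq]
    exact hA.exp_mem_boseMesner (Subalgebra.smul_mem _ (hA.adjMatrix_mem_boseMesner hMem) _)
  obtain ⟨r, hr, -⟩ := hA.existsUnique_apply_eq_one v u
  have hUr := hA.eq_smul_of_mulVec_single hU hr hμ
  have hcol : ∀ w, A r w u = 1 → w = v := fun w hw => by
    by_contra hwv
    have := congrFun hμ w
    simp [hUr, hw, hwv, ne_zero_of_transitionMatrix_mulVec_single hμ] at this
  refine ⟨μ ^ 2, ?_⟩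
  have hsq : (A r).map Complex.ofReal * (A r).map Complex.ofReal = 1 := by
    have := congrArg (Matrix.map · Complex.ofRealHom) (hA.mul_self_eq_one_of_apply_eq_one hr hcol)
    rwa [Matrix.map_mul, Matrix.map_one _ (map_zero _) (map_one _)] at this
  rw [two_mul, transitionMatrix_add, hUr, smul_mul_smul_comm, hsq, sq]

theorem isRegularOfDegree (hA : IsAssocScheme A)
    (hMem : ∃ coeff : Fin (d+1) → ℝ, G.adjMatrix ℝ = ∑ i, coeff i • A i) (u : V) :
    G.IsRegularOfDegree (G.degree u) := by
  obtain ⟨coeff, hcoeff⟩ := hMem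
  have hdeg : ∀ w, (G.degree w : ℝ) = ∑ i, coeff i * ∑ z, A i w z := fun w => by
    have := G.adjMatrix_mulVec_const_apply (α := ℝ) (a := 1) (v := w)
    rw [mul_one, hcoeff] at this
    rw [← this]
    simp [Matrix.mulVec, dotProduct, Matrix.sum_apply, Finset.mul_sum, Finset.sum_comm (γ := V)]
  intro w
  exact_mod_cast (hdeg w).trans <| (Finset.sum_congr rfl fun i _ => by
    rw [hA.sum_apply_eq_sum_apply i w u]).trans (hdeg u).symm

end IsAssocScheme

/-- If a graph belonging to a symmetric association scheme admits
perfect state transfer between some pair of distinct vertices at some time, then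
every eigenvalue of its adjacency matrix is an integer. -/
theorem stmt_2 {V : Type*} [Fintype V] [DecidableEq V] {d : ℕ}
    (G : SimpleGraph V) [DecidableRel G.Adj]
    (A : Fin (d+1) → Matrix V V ℝ)
    (hScheme : IsAssocScheme A)
    (hMem : ∃ coeff : Fin (d+1) → ℝ, G.adjMatrix ℝ = ∑ i, coeff i • A i)
    (hpst : ∃ (u v : V) (τ : ℝ), HasPST G u v τ) :
    ∀ x ∈ spectrum ℝ (G.adjMatrix ℝ), ∃ k : ℤ, x = (k : ℝ) := by
  obtain ⟨u, v, τ, hpst⟩ := hpst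
  obtain ⟨c, hc⟩ := hScheme.exists_transitionMatrix_two_mul_eq_smul_one hMem hpst
  obtain ⟨hτ, hA0⟩ := smul_ne_zero_iff.mp hpst.smul_adjMatrix_ne_zero
  have h2τ : 2 * τ ≠ 0 :=
    mul_ne_zero two_ne_zero (Complex.ofReal_ne_zero.mp (right_ne_zero_of_mul hτ))
  have hreg := hScheme.isRegularOfDegree hMem u
  refine hreg.exists_int_eq_of_transitionMatrix_eq_smul_one (fun hk => hA0 ?_) h2τ hc
  exact (hk ▸ hreg).adjMatrix_eq_zero ℂ
end

section
/- Let H be an n×n Hadamard matrix with n ≥ 2, and let X(H) be the Hadamard graph of H. Then X(H) admits perfect state transfer if and only if n is a perfect square; in that case, perfect state transfer occurs at time π/√n, from each vertex (row, r, +) to (row, r, −) and from each vertex (col, c, +) to (col, c, −). -/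
open Matrix

/-- The sign `±1` attached to a Boolean. -/
def signB (b : Bool) : ℝ := if b then 1 else -1

/-- The Hadamard graph `X(H)` of an `n × n` Hadamard matrix `H`. Vertices are
triples `(k, i, s)` where `k = true` marks a row vertex and `k = false` a column
vertex, `i` is the row/column index and `s` the sign. A row vertex `(true, r, s)`
is adjacent to a column vertex `(false, c, s')` iff `H r c = sign s · sign s'`. -/
def hadamardGraph {n : ℕ} (H : Matrix (Fin n) (Fin n) ℝ) :
    SimpleGraph (Bool × Fin n × Bool) :=
  SimpleGraph.fromRel (fun x y =>
    x.1 = true ∧ y.1 = false ∧ H x.2.1 y.2.1 = signB x.2.2 * signB y.2.2)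

/-!
Because `H` has entries `±1`, the adjacency matrix of `X(H)` is `S + T`, where `S` has the
entries `±H r c / 2` and `T` is half the adjacency matrix of the complete bipartite graph between
row and column vertices. The Hadamard relations give `S T = T S = 0`, `S³ = n S` and `T³ = n² T`,
so `exp (i t A) = exp (i t S) + exp (i t T) - 1`, and each of these is a quadratic polynomial in
`S`, resp. `T`, with coefficients `sin`, `cos` of `√n t`, resp. `n t`. In the block of the
initial vertex, perfect state transfer forces `cos (n t) = 1` and `cos (√n t) = -1`, so `√n` is
rational. Conversely, if
`n = s²` (`s` is even since `n` is), then at `t = π / √n` the transition matrix is `1 - (2/n) S²`,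
which swaps the two vertices of each pair.
-/

open NormedSpace

section NormedAlgebraExp

variable {𝔸 : Type*} [NormedRing 𝔸] [NormedAlgebra ℂ 𝔸] [CompleteSpace 𝔸]

theorem mul_exp_eq_self_of_mul_eq_zero {x y : 𝔸} (h : x * y = 0) : x * exp y = x := by
  refine ((exp_series_hasSum_exp' (𝕂 := ℂ) y).mul_left x).unique
    ((hasSum_ite_eq 0 x).congr_fun fun k => ?_)
  cases k with
  | zero => simp
  | succ k => simp [pow_succ', ← mul_assoc, h]

theorem exp_mul_eq_self_of_mul_eq_zero {x y : 𝔸} (h : x * y = 0) : exp x * y = y := by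
  refine ((exp_series_hasSum_exp' (𝕂 := ℂ) x).mul_right y).unique
    ((hasSum_ite_eq 0 y).congr_fun fun k => ?_)
  cases k with
  | zero => simp
  | succ k => simp [pow_succ, mul_assoc, h]

theorem exp_add_of_mul_eq_zero {x y : 𝔸} (hxy : x * y = 0) (hyx : y * x = 0) :
    exp (x + y) = exp x + exp y - 1 := by
  have hball (z : 𝔸) : z ∈ Metric.eball (0 : 𝔸) (expSeries ℂ 𝔸).radius := by
    simp [expSeries_radius_eq_top]
  have hy : (exp x - 1) * y = 0 := by
    rw [sub_mul, exp_mul_eq_self_of_mul_eq_zero hxy, one_mul, sub_self]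
  have h := mul_exp_eq_self_of_mul_eq_zero hy
  rw [sub_mul, one_mul] at h
  rw [exp_add_of_commute_of_mem_ball (𝕂 := ℂ) (hxy.trans hyx.symm) (hball x) (hball y),
    ← sub_eq_zero, ← sub_eq_zero.mpr h]
  abel

theorem IsIdempotentElem.exp_smul {p : 𝔸} (hp : IsIdempotentElem p) (c : ℂ) :
    exp (c • p) = 1 + (Complex.exp c - 1) • p := by
  have hc : HasSum (fun k : ℕ => ((k.factorial : ℂ)⁻¹ * c ^ k) • p) (Complex.exp c • p) := by
    rw [Complex.exp_eq_exp_ℂ]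
    simpa [smul_eq_mul] using (exp_series_hasSum_exp' (𝕂 := ℂ) c).smul_const p
  refine (exp_series_hasSum_exp' (𝕂 := ℂ) (c • p)).unique ?_
  rw [sub_smul, one_smul, add_sub, add_sub_right_comm, add_comm]
  refine (hc.add (hasSum_ite_eq 0 (1 - p))).congr_fun fun k => ?_
  cases k with
  | zero => simp
  | succ k => simp [smul_pow, hp.pow_succ_eq, smul_smul]

theorem exp_smul_of_mul_mul_eq_sq_smul {M : 𝔸} {a : ℂ} (ha : a ≠ 0)
    (hM : M * M * M = a ^ 2 • M) (c : ℂ) :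
    exp (c • M) = 1 + (Complex.sinh (c * a) / a) • M
      + ((Complex.cosh (c * a) - 1) / a ^ 2) • (M * M) := by
  have hM' : M * (M * M) = a ^ 2 • M := by rw [← mul_assoc, hM]
  have hM4 : M * M * (M * M) = a ^ 2 • (M * M) := by rw [← mul_assoc, hM, smul_mul_assoc]
  -- the spectral projections of `M` for its eigenvalues `a` and `-a`
  set P := (2 * a ^ 2)⁻¹ • (M * M + a • M) with hP
  set Q := (2 * a ^ 2)⁻¹ • (M * M - a • M) with hQ
  obtain ⟨hPP, hQQ, hPQ, hQP⟩ :
      IsIdempotentElem P ∧ IsIdempotentElem Q ∧ P * Q = 0 ∧ Q * P = 0 := by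
    refine ⟨?_, ?_, ?_, ?_⟩ <;>
      simp only [IsIdempotentElem, hP, hQ, add_mul, mul_add, sub_mul, mul_sub, smul_mul_assoc,
        mul_smul_comm, hM4, hM, hM'] <;>
      match_scalars <;> field_simp <;> ring
  have hsplit : c • M = (c * a) • P + (-(c * a)) • Q := by
    simp only [hP, hQ, smul_add, smul_sub, smul_smul]
    match_scalars <;> field_simp <;> ring
  rw [hsplit, exp_add_of_mul_eq_zero (by rw [smul_mul_smul_comm, hPQ, smul_zero])
      (by rw [smul_mul_smul_comm, hQP, smul_zero]), hPP.exp_smul, hQQ.exp_smul,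
    Complex.sinh, Complex.cosh, hP, hQ]
  match_scalars <;> field_simp <;> ring

end NormedAlgebraExp

namespace Matrix

variable {m : Type*} [Fintype m] [DecidableEq m]

open scoped Norms.Operator in
theorem exp_add_of_mul_eq_zero {A B : Matrix m m ℂ} (hAB : A * B = 0) (hBA : B * A = 0) :
    exp (A + B) = exp A + exp B - 1 :=
  _root_.exp_add_of_mul_eq_zero hAB hBA

open scoped Norms.Operator in
theorem exp_smul_of_mul_mul_eq_sq_smul {A : Matrix m m ℂ} {a : ℂ} (ha : a ≠ 0)
    (hA : A * A * A = a ^ 2 • A) (c : ℂ) :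
    exp (c • A) = 1 + (Complex.sinh (c * a) / a) • A
      + ((Complex.cosh (c * a) - 1) / a ^ 2) • (A * A) :=
  _root_.exp_smul_of_mul_mul_eq_sq_smul ha hA c

theorem mul_eq_smul_one_comm {K : Type*} [Field K] {A B : Matrix m m K} {c : K} (hc : c ≠ 0)
    (h : A * B = c • 1) : B * A = c • 1 := by
  have hinv : c⁻¹ • B * A = 1 :=
    mul_eq_one_comm.mp (by rw [mul_smul_comm, h, smul_smul, inv_mul_cancel₀ hc, one_smul])
  calc B * A = c • (c⁻¹ • B * A) := by rw [smul_mul_assoc, smul_smul, mul_inv_cancel₀ hc, one_smul]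
    _ = c • 1 := by rw [hinv]

end Matrix

theorem sum_mul_eq_of_mul_transpose {n : ℕ} {H : Matrix (Fin n) (Fin n) ℝ}
    (hH : H * Hᵀ = (n : ℝ) • 1) (r r' : Fin n) :
    ∑ c, (H r c : ℂ) * H r' c = if r = r' then (n : ℂ) else 0 := by
  have h := congrFun (congrFun hH r) r'
  simp only [Matrix.mul_apply, Matrix.transpose_apply, Matrix.smul_apply, Matrix.one_apply,
    smul_eq_mul, mul_ite, mul_one, mul_zero] at h
  split_ifs at h ⊢ <;> exact_mod_cast h

theorem sum_mul_eq_of_transpose_mul {n : ℕ} {H : Matrix (Fin n) (Fin n) ℝ}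
    (hH : Hᵀ * H = (n : ℝ) • 1) (c c' : Fin n) :
    ∑ r, (H r c : ℂ) * H r c' = if c = c' then (n : ℂ) else 0 :=
  sum_mul_eq_of_mul_transpose (H := Hᵀ) (by rwa [Matrix.transpose_transpose]) c c'

theorem even_card_of_dotProduct_eq_zero {ι : Type*} [Fintype ι] {v w : ι → ℝ}
    (hv : ∀ i, v i = 1 ∨ v i = -1) (hw : ∀ i, w i = 1 ∨ w i = -1) (h : v ⬝ᵥ w = 0) :
    Even (Fintype.card ι) := by
  have hterm (i : ι) : 1 - v i * w i = 2 * if v i ≠ w i then 1 else 0 := by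
    rcases hv i with h | h <;> rcases hw i with h' | h' <;> norm_num [h, h']
  have hcard : (Fintype.card ι : ℝ) = 2 * (Finset.univ.filter fun i => v i ≠ w i).card := by
    calc (Fintype.card ι : ℝ) = ∑ i, (1 - v i * w i) := by
          simp [Finset.sum_sub_distrib, show ∑ i, v i * w i = 0 from h]
      _ = _ := by simp_rw [hterm, ← Finset.mul_sum, Finset.sum_boole]
  exact ⟨_, by exact_mod_cast hcard.trans (two_mul _)⟩

theorem even_of_mul_transpose_eq_smul_one {n : ℕ} {H : Matrix (Fin n) (Fin n) ℝ} (hn : 2 ≤ n)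
    (hent : ∀ i j, H i j = 1 ∨ H i j = -1) (hrow : H * Hᵀ = (n : ℝ) • 1) : Even n := by
  let r₀ : Fin n := ⟨0, by omega⟩
  let r₁ : Fin n := ⟨1, by omega⟩
  have horth : H r₀ ⬝ᵥ H r₁ = 0 := by
    have h := congrFun (congrFun hrow r₀) r₁
    rwa [Matrix.mul_apply', Matrix.smul_apply,
      Matrix.one_apply_ne (by simp [r₀, r₁, Fin.ext_iff]), smul_zero] at h
  simpa using even_card_of_dotProduct_eq_zero (hent r₀) (hent r₁) horth

theorem Nat.isSquare_of_cos_sqrt_mul_eq_neg_one {n : ℕ} {t : ℝ}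
    (h₁ : Real.cos (√n * t) = -1) (h₂ : Real.cos (n * t) = 1) : IsSquare n := by
  obtain ⟨k, hk⟩ := Real.cos_eq_neg_one_iff.mp h₁
  obtain ⟨m, hm⟩ := (Real.cos_eq_one_iff _).mp h₂
  have hodd : (2 * k + 1 : ℝ) ≠ 0 := by exact_mod_cast (by omega : 2 * k + 1 ≠ 0)
  have hsqrt : √n * (2 * k + 1) = 2 * m := by
    have h := congrArg (√n * ·) hk
    simp only [← mul_assoc, Real.mul_self_sqrt n.cast_nonneg, ← hm] at h
    have := Real.pi_pos
    nlinarith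
  by_contra hsq
  refine irrational_sqrt_natCast_iff.mpr hsq ⟨2 * m / (2 * k + 1), ?_⟩
  push_cast
  rw [div_eq_iff hodd, hsqrt]

theorem HasPST.transitionMatrix_apply_eq_zero {V : Type*} [Fintype V] [DecidableEq V]
    {G : SimpleGraph V} {u v : V} {t : ℝ} (h : HasPST G u v t) {x : V} (hx : x ≠ v) :
    transitionMatrix G t x u = 0 := by
  obtain ⟨-, μ, hμ⟩ := h
  simpa [hx] using congrFun hμ x

@[simp] theorem signB_mul_self (b : Bool) : signB b * signB b = 1 := by
  cases b <;> simp [signB]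

namespace HadamardGraph

variable {n : ℕ}

-- The matrices `S` and `T` of the proof sketch: as `H r c = ±1`, the indicator of
-- `H r c = σ * σ'` is `(1 + σ * σ' * H r c) / 2`.
noncomputable def signedPart (H : Matrix (Fin n) (Fin n) ℝ) :
    Matrix (Bool × Fin n × Bool) (Bool × Fin n × Bool) ℂ := fun x y =>
  if x.1 = y.1 then 0
  else signB x.2.2 * signB y.2.2 * (if x.1 then H x.2.1 y.2.1 else H y.2.1 x.2.1) / 2

noncomputable def uniformPart (n : ℕ) :
    Matrix (Bool × Fin n × Bool) (Bool × Fin n × Bool) ℂ := fun x y =>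
  if x.1 = y.1 then 0 else 1 / 2

theorem sum_vertex {M : Type*} [AddCommMonoid M] (f : Bool × Fin n × Bool → M) :
    ∑ z, f z = ∑ j, (f (true, j, true) + f (true, j, false))
      + ∑ j, (f (false, j, true) + f (false, j, false)) := by
  simp only [Fintype.sum_prod_type, Fintype.sum_bool]

variable (H : Matrix (Fin n) (Fin n) ℝ)

theorem adjMatrix_hadamardGraph (hent : ∀ i j, H i j = 1 ∨ H i j = -1)
    [DecidableRel (hadamardGraph H).Adj] :
    (hadamardGraph H).adjMatrix ℂ = signedPart H + uniformPart n := by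
  ext ⟨xb, xi, xs⟩ ⟨yb, yi, ys⟩
  rw [SimpleGraph.adjMatrix_apply]
  cases xb <;> cases yb <;>
    rcases hent xi yi with h | h <;> rcases hent yi xi with h' | h' <;>
    cases xs <;> cases ys <;>
    simp [hadamardGraph, signedPart, uniformPart, signB, h, h'] <;> norm_num

theorem signedPart_mul_uniformPart : signedPart H * uniformPart n = 0 := by
  ext ⟨xb, xi, xs⟩ ⟨yb, yi, ys⟩
  rw [Matrix.mul_apply, sum_vertex]
  cases xb <;> cases yb <;> simp [signedPart, uniformPart, signB] <;>
    exact Finset.sum_eq_zero fun _ _ => by ring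

theorem uniformPart_mul_signedPart : uniformPart n * signedPart H = 0 := by
  ext ⟨xb, xi, xs⟩ ⟨yb, yi, ys⟩
  rw [Matrix.mul_apply, sum_vertex]
  cases xb <;> cases yb <;> simp [signedPart, uniformPart, signB] <;>
    exact Finset.sum_eq_zero fun _ _ => by ring

theorem uniformPart_mul_self_apply (x y : Bool × Fin n × Bool) :
    (uniformPart n * uniformPart n) x y = if x.1 = y.1 then (n : ℂ) / 2 else 0 := by
  rw [Matrix.mul_apply, sum_vertex]
  obtain ⟨xb, xi, xs⟩ := x; obtain ⟨yb, yi, ys⟩ := y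
  cases xb <;> cases yb <;> simp [uniformPart] <;> ring

theorem signedPart_mul_self_apply (hrow : H * Hᵀ = (n : ℝ) • 1) (hcol : Hᵀ * H = (n : ℝ) • 1)
    (x y : Bool × Fin n × Bool) :
    (signedPart H * signedPart H) x y =
      if x.1 = y.1 ∧ x.2.1 = y.2.1 then (n : ℂ) / 2 * (signB x.2.2 * signB y.2.2) else 0 := by
  rw [Matrix.mul_apply, sum_vertex]
  obtain ⟨xb, xi, xs⟩ := x; obtain ⟨yb, yi, ys⟩ := y
  have hterm (a b : ℂ) : (signB xs : ℂ) * signB true * a / 2 * (signB true * signB ys * b / 2)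
      + signB xs * signB false * a / 2 * (signB false * signB ys * b / 2)
      = signB xs * signB ys / 2 * (a * b) := by
    simp only [signB, ↓reduceIte, Bool.false_eq_true, Complex.ofReal_one, Complex.ofReal_neg]
    ring
  cases xb <;> cases yb <;>
    simp [signedPart, hterm, ← Finset.mul_sum, sum_mul_eq_of_mul_transpose hrow,
      sum_mul_eq_of_transpose_mul hcol] <;>
    split_ifs <;> ring

theorem uniformPart_cube :
    uniformPart n * uniformPart n * uniformPart n = (n : ℂ) ^ 2 • uniformPart n := by
  ext ⟨xb, xi, xs⟩ ⟨yb, yi, ys⟩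
  rw [Matrix.mul_apply, sum_vertex]
  cases xb <;> cases yb <;> simp [uniformPart_mul_self_apply, uniformPart] <;> ring

theorem signedPart_cube (hrow : H * Hᵀ = (n : ℝ) • 1) (hcol : Hᵀ * H = (n : ℝ) • 1) :
    signedPart H * signedPart H * signedPart H = (n : ℂ) • signedPart H := by
  ext ⟨xb, xi, xs⟩ ⟨yb, yi, ys⟩
  rw [Matrix.mul_apply, sum_vertex]
  cases xb <;> cases yb <;> cases xs <;> cases ys <;>
    simp [signedPart_mul_self_apply H hrow hcol, signedPart, signB, Finset.sum_add_distrib] <;>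
    ring

open Complex in
theorem transitionMatrix_hadamardGraph (hn : n ≠ 0) (hent : ∀ i j, H i j = 1 ∨ H i j = -1)
    (hrow : H * Hᵀ = (n : ℝ) • 1) (hcol : Hᵀ * H = (n : ℝ) • 1) (t : ℝ) :
    transitionMatrix (hadamardGraph H) t = 1
      + (I * Real.sin (√n * t) / √n : ℂ) • signedPart H
      + ((Real.cos (√n * t) - 1) / n : ℂ) • (signedPart H * signedPart H)
      + (I * Real.sin (n * t) / n : ℂ) • uniformPart n
      + ((Real.cos (n * t) - 1) / n ^ 2 : ℂ) • (uniformPart n * uniformPart n) := by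
  have hsinh (a : ℝ) : sinh (I * t * a) = I * Real.sin (a * t) := by
    rw [show I * t * a = ((a * t : ℝ) : ℂ) * I by push_cast; ring, sinh_mul_I, ofReal_sin]; ring
  have hcosh (a : ℝ) : cosh (I * t * a) = Real.cos (a * t) := by
    rw [show I * t * a = ((a * t : ℝ) : ℂ) * I by push_cast; ring, cosh_mul_I, ofReal_cos]
  have hsqrt : ((√n : ℝ) : ℂ) ^ 2 = n := by
    rw [← ofReal_pow, Real.sq_sqrt n.cast_nonneg, ofReal_natCast]
  have hS := signedPart_cube H hrow hcol
  rw [← hsqrt] at hS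
  have hT := uniformPart_cube (n := n)
  rw [← ofReal_natCast] at hT
  unfold transitionMatrix
  classical
  rw [adjMatrix_hadamardGraph H hent, smul_add,
    Matrix.exp_add_of_mul_eq_zero
      (by rw [smul_mul_smul_comm, signedPart_mul_uniformPart, smul_zero])
      (by rw [smul_mul_smul_comm, uniformPart_mul_signedPart, smul_zero]),
    Matrix.exp_smul_of_mul_mul_eq_sq_smul (by simpa using hn) hS,
    Matrix.exp_smul_of_mul_mul_eq_sq_smul (by simpa using hn) hT,
    hsinh, hcosh, hsinh, hcosh, hsqrt]
  push_cast
  abel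

theorem transitionMatrix_apply_of_fst_eq (hn : n ≠ 0) (hent : ∀ i j, H i j = 1 ∨ H i j = -1)
    (hrow : H * Hᵀ = (n : ℝ) • 1) (hcol : Hᵀ * H = (n : ℝ) • 1) (t : ℝ)
    {x y : Bool × Fin n × Bool} (hxy : x.1 = y.1) :
    transitionMatrix (hadamardGraph H) t x y = ((if x = y then 1 else 0)
      + (if x.2.1 = y.2.1 then (Real.cos (√n * t) - 1) / 2 * (signB x.2.2 * signB y.2.2) else 0)
      + (Real.cos (n * t) - 1) / (2 * n) : ℝ) := by
  rw [transitionMatrix_hadamardGraph H hn hent hrow hcol]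
  simp only [Matrix.add_apply, Matrix.smul_apply, Matrix.one_apply,
    signedPart_mul_self_apply H hrow hcol, uniformPart_mul_self_apply, signedPart, uniformPart, hxy,
    true_and, if_true, smul_eq_mul, mul_zero, add_zero]
  split_ifs <;> push_cast <;> field_simp <;> ring

theorem isSquare_of_hasPST (hn : 2 ≤ n) (hent : ∀ i j, H i j = 1 ∨ H i j = -1)
    (hrow : H * Hᵀ = (n : ℝ) • 1) (hcol : Hᵀ * H = (n : ℝ) • 1)
    {u v : Bool × Fin n × Bool} {t : ℝ} (h : HasPST (hadamardGraph H) u v t) : IsSquare n := by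
  have hn0 : n ≠ 0 := by omega
  have : Nontrivial (Fin n) := Fin.nontrivial_iff_two_le.mpr hn
  obtain ⟨k, i, s⟩ := u
  obtain ⟨j, hji⟩ := exists_ne i
  obtain ⟨s', hs'⟩ : ∃ s', (k, j, s') ≠ v := by
    by_cases hv : (k, j, true) = v
    · exact ⟨false, by simp [← hv]⟩
    · exact ⟨true, hv⟩
  have hfar := h.transitionMatrix_apply_eq_zero hs'
  have hself := h.transitionMatrix_apply_eq_zero h.1
  rw [transitionMatrix_apply_of_fst_eq H hn0 hent hrow hcol t (x := (k, j, s')) (y := (k, i, s))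
    rfl, Complex.ofReal_eq_zero] at hfar
  rw [transitionMatrix_apply_of_fst_eq H hn0 hent hrow hcol t (x := (k, i, s)) (y := (k, i, s))
    rfl, Complex.ofReal_eq_zero] at hself
  simp only [Prod.mk.injEq, hji, false_and, and_false, ↓reduceIte, signB_mul_self,
    mul_one, add_zero, zero_add, div_eq_zero_iff, mul_eq_zero, OfNat.ofNat_ne_zero,
    Nat.cast_eq_zero, hn0, or_self, or_false] at hfar hself
  have hcos : Real.cos (n * t) = 1 := by linarith
  rw [hcos, sub_self, zero_div, add_zero] at hself
  exact Nat.isSquare_of_cos_sqrt_mul_eq_neg_one (by linarith) hcos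

theorem hasPST_pi_div_sqrt (hn : 2 ≤ n) (hent : ∀ i j, H i j = 1 ∨ H i j = -1)
    (hrow : H * Hᵀ = (n : ℝ) • 1) (hcol : Hᵀ * H = (n : ℝ) • 1) (hsq : IsSquare n)
    (k : Bool) (i : Fin n) :
    HasPST (hadamardGraph H) (k, i, true) (k, i, false) (Real.pi / √n) := by
  have hn0 : n ≠ 0 := by omega
  obtain ⟨s, hs⟩ := hsq
  obtain ⟨m, rfl⟩ : Even s := by
    have := even_of_mul_transpose_eq_smul_one hn hent hrow
    rw [hs, Nat.even_mul, or_self] at this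
    exact this
  have hm : (m : ℝ) ≠ 0 := by rintro h; simp_all
  have hsqrt : √(n : ℝ) = 2 * m := by
    rw [hs, Nat.cast_mul, Real.sqrt_mul_self (by positivity)]; push_cast; ring
  have h₁ : √n * (Real.pi / √n) = Real.pi := by rw [hsqrt]; field_simp
  have h₂ : n * (Real.pi / √n) = (2 * m : ℕ) * Real.pi := by
    rw [hsqrt, hs]; push_cast; field_simp; ring
  have hU : transitionMatrix (hadamardGraph H) (Real.pi / √n)
      = 1 - (2 / n : ℂ) • (signedPart H * signedPart H) := by
    rw [transitionMatrix_hadamardGraph H hn0 hent hrow hcol, h₁, h₂, Real.sin_pi, Real.cos_pi,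
      Real.sin_nat_mul_pi, show ((2 * m : ℕ) : ℝ) * Real.pi = m * (2 * Real.pi) by push_cast; ring,
      Real.cos_nat_mul_two_pi]
    simp only [mul_zero, zero_div, zero_smul, add_zero, Complex.ofReal_zero]
    module
  refine ⟨by simp, 1, ?_⟩
  rw [hU]
  have hn' : (n : ℂ) ≠ 0 := by exact_mod_cast hn0
  funext ⟨xb, xi, xs⟩
  by_cases hk : xb = k <;> by_cases hi : xi = i <;> cases xs <;>
    simp [signedPart_mul_self_apply H hrow hcol, hk, hi, hn', signB]

end HadamardGraph

/-- A Hadamard graph `X(H)` (for an `n × n` Hadamard matrix `H`,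
`n ≥ 2`) admits perfect state transfer iff `n` is a perfect square, and in that
case it occurs at time `π/√n` between the two vertices of each row pair and each
column pair. -/
theorem stmt_11 (n : ℕ) (hn : 2 ≤ n)
    (H : Matrix (Fin n) (Fin n) ℝ)
    (hent : ∀ i j, H i j = 1 ∨ H i j = -1)
    (hHad : H * Hᵀ = (n : ℝ) • 1) :
    ((∃ (u v : Bool × Fin n × Bool) (t : ℝ), 0 < t ∧ HasPST (hadamardGraph H) u v t) ↔
      ∃ s : ℕ, n = s ^ 2) ∧
    ((∃ s : ℕ, n = s ^ 2) → ∀ (k : Bool) (i : Fin n),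
      HasPST (hadamardGraph H) (k, i, true) (k, i, false)
        (Real.pi / Real.sqrt (n : ℝ))) := by
  have hn0 : (0 : ℝ) < n := by exact_mod_cast (by omega : 0 < n)
  have hcol : Hᵀ * H = (n : ℝ) • 1 := Matrix.mul_eq_smul_one_comm hn0.ne' hHad
  have hpst (hsq : ∃ s : ℕ, n = s ^ 2) (k : Bool) (i : Fin n) :
      HasPST (hadamardGraph H) (k, i, true) (k, i, false) (Real.pi / √n) :=
    HadamardGraph.hasPST_pi_div_sqrt H hn hent hHad hcol ((isSquare_iff_exists_sq n).mpr hsq) k i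
  refine ⟨⟨fun ⟨_, _, _, _, h⟩ => ?_, fun hsq => ?_⟩, hpst⟩
  · exact (isSquare_iff_exists_sq n).mp (HadamardGraph.isSquare_of_hasPST H hn hent hHad hcol h)
  · exact ⟨_, _, _, div_pos Real.pi_pos (Real.sqrt_pos.mpr hn0), hpst hsq true ⟨0, by omega⟩⟩
end
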